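/- arXiv:2012.08294 — 5 statements merged into one kernel-verified Lean document; each statement's English description precedes it below -/
import Mathlib

section
/- Let X be a Weibull random variable with shape α > 0 and scale β > 0 and density f(x;α,β) = (α/β)(x/β)^{α-1} exp(-(x/β)^α). Then for all real s and r with r > 0 and s - r + 1 > -α r, one has E[X^s f^{r-1}(X;α,β)] = (α^{r-1} β^{s-r+1} / r^{r + (s-r+1)/α}) Γ(r + (s-r+1)/α), where Γ is the gamma function. -/
open Filter Topology Real MeasureTheory

/-- The Weibull probability density function with shape `α` and scale `β`. -/
noncomputable def weibullPDF (α β x : ℝ) : ℝ :=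
  (α / β) * (x / β) ^ (α - 1) * Real.exp (-(x / β) ^ α)

/-- First main tool: `E[X^s f^{r-1}(X;α,β)]
  = (α^{r-1} β^{s-r+1} / r^{r+(s-r+1)/α}) Γ(r + (s-r+1)/α)`. -/
theorem weibullPDF_first_main_tool (α β s r : ℝ) (hα : 0 < α) (hβ : 0 < β) (hr : 0 < r)
    (h : s - r + 1 > -(α * r)) :
    (∫ x in Set.Ioi (0 : ℝ), x ^ s * (weibullPDF α β x) ^ r) =
      α ^ (r - 1) * β ^ (s - r + 1) / r ^ (r + (s - r + 1) / α) *
        Real.Gamma (r + (s - r + 1) / α) := by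
  have hβα : (0:ℝ) < β ^ α := rpow_pos_of_pos hβ α
  set q : ℝ := s + (α - 1) * r with hq
  set b : ℝ := r / β ^ α with hb
  set C : ℝ := (α / β) ^ r * (β ^ (α - 1)) ^ (-r) with hC
  have hbpos : 0 < b := div_pos hr hβα
  have hq1 : -1 < q := by
    have : -(α * r) < s - r + 1 := h
    simp only [hq]; nlinarith
  have step1 : (∫ x in Set.Ioi (0 : ℝ), x ^ s * (weibullPDF α β x) ^ r) =
      ∫ x in Set.Ioi (0 : ℝ), C * (x ^ q * Real.exp (-b * x ^ α)) := by
    refine setIntegral_congr_fun measurableSet_Ioi (fun x hx => ?_)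
    have hx : (0:ℝ) < x := hx
    have hxβ : (0:ℝ) < x / β := div_pos hx hβ
    have h1 : (weibullPDF α β x) ^ r
        = (α/β)^r * ((x/β)^(α-1))^r * (Real.exp (-(x/β)^α))^r := by
      unfold weibullPDF
      rw [mul_rpow (by positivity) (Real.exp_nonneg _), mul_rpow (by positivity) (by positivity)]
    have h2 : ((x/β)^(α-1))^r = (x/β)^((α-1)*r) := (Real.rpow_mul hxβ.le _ _).symm
    have h3 : (x/β)^((α-1)*r) = x^((α-1)*r) * (β ^ (α-1))^(-r) := by
      rw [div_rpow hx.le hβ.le, ← Real.rpow_mul hβ.le, mul_neg, Real.rpow_neg hβ.le,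
        div_eq_mul_inv]
    have h4 : (Real.exp (-(x/β)^α))^r = Real.exp (-b * x^α) := by
      rw [← Real.exp_mul]; congr 1; rw [div_rpow hx.le hβ.le, hb]; ring
    rw [h1, h2, h3, h4, hC, hq, Real.rpow_add hx]; ring
  rw [step1, MeasureTheory.integral_const_mul,
    integral_rpow_mul_exp_neg_mul_rpow hα hq1 hbpos]
  have ht : -(q + 1) / α = -(r + (s - r + 1) / α) := by
    rw [hq]; field_simp; ring
  have ht2 : (q + 1) / α = r + (s - r + 1) / α := by
    rw [hq]; field_simp; ring
  rw [ht, ht2]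
  set t : ℝ := r + (s - r + 1) / α with htdef
  have hconst : C * (b ^ (-t) * (1 / α)) = α ^ (r - 1) * β ^ (s - r + 1) / r ^ t := by
    have e6 : (1/α : ℝ) = Real.exp (-(Real.log α)) := by
      rw [Real.exp_neg, Real.exp_log hα, one_div]
    rw [hC, hb, e6,
      Real.rpow_def_of_pos (div_pos hα hβ), Real.log_div hα.ne' hβ.ne',
      Real.rpow_def_of_pos (rpow_pos_of_pos hβ (α-1)), Real.log_rpow hβ,
      Real.rpow_def_of_pos (div_pos hr hβα), Real.log_div hr.ne' hβα.ne', Real.log_rpow hβ,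
      Real.rpow_def_of_pos hα, Real.rpow_def_of_pos hβ, Real.rpow_def_of_pos hr,
      ← Real.exp_add, ← Real.exp_add, ← Real.exp_add, ← Real.exp_add, ← Real.exp_sub,
      Real.exp_eq_exp, htdef]
    field_simp
    ring
  rw [← mul_assoc, hconst]
end

section
/- Let X be a Weibull random variable with shape α > 1/2 and scale β > 0. Then the quadratic (collision) entropy of X satisfies H₂(X) = -log ∫₀^∞ f²(x;α,β) dx = log(β) - log(α) + (2 - 1/α) log 2 - log Γ(2 - 1/α). -/
open Filter Topology Real MeasureTheory

/-- Quadratic (collision) entropy of the Weibull distribution for `α > 1/2`. -/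
theorem weibullPDF_quadratic_entropy (α β : ℝ) (hα : 1 / 2 < α) (hβ : 0 < β) :
    -Real.log (∫ x in Set.Ioi (0 : ℝ), (weibullPDF α β x) ^ 2) =
      Real.log β - Real.log α + (2 - 1 / α) * Real.log 2 -
        Real.log (Real.Gamma (2 - 1 / α)) := by
  have hα0 : 0 < α := lt_trans (by norm_num) hα
  have hs : (0:ℝ) < 2 - 1 / α := by
    have : 1 / α < 2 := by
      rw [div_lt_iff₀ hα0]
      linarith
    linarith
  have hq : (-1 : ℝ) < 2 * α - 2 := by linarith
  have hb : (0:ℝ) < 2 * β ^ (-α) := by positivity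
  have key : (∫ x in Set.Ioi (0 : ℝ), (weibullPDF α β x) ^ 2)
      = α / β * 2 ^ (-(2 - 1/α)) * Real.Gamma (2 - 1/α) := by
    have h1 : (∫ x in Set.Ioi (0 : ℝ), (weibullPDF α β x) ^ 2)
        = ∫ x in Set.Ioi (0 : ℝ),
            ((α / β)^2 * β ^ (2 - 2*α)) * (x ^ (2*α - 2) * Real.exp (-(2 * β ^ (-α)) * x ^ α)) := by
      refine setIntegral_congr_fun measurableSet_Ioi (fun x hx => ?_)
      have hx0 : (0:ℝ) < x := hx
      have hxb : (0:ℝ) < x / β := div_pos hx0 hβ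
      have hdiv : (x / β) ^ α = β ^ (-α) * x ^ α := by
        rw [Real.div_rpow hx0.le hβ.le, Real.rpow_neg hβ.le]
        ring
      have hdiv' : (x / β) ^ (α - 1) = x ^ (α - 1) * β ^ (1 - α) := by
        rw [Real.div_rpow hx0.le hβ.le, div_eq_mul_inv, ← Real.rpow_neg hβ.le, neg_sub]
      have hxp : x ^ (α - 1) * x ^ (α - 1) = x ^ (2*α - 2) := by
        rw [← Real.rpow_add hx0]; ring_nf
      have hbp : β ^ (1 - α) * β ^ (1 - α) = β ^ (2 - 2*α) := by
        rw [← Real.rpow_add hβ]; ring_nf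
      have hexp : Real.exp (-(x / β) ^ α) ^ 2 = Real.exp (-(2 * β ^ (-α)) * x ^ α) := by
        rw [← Real.exp_nat_mul, hdiv]; ring_nf
      calc (weibullPDF α β x) ^ 2
          = (α/β)^2 * ((x/β) ^ (α-1) * (x/β) ^ (α-1)) * Real.exp (-(x / β) ^ α) ^ 2 := by
            unfold weibullPDF; ring
        _ = ((α / β)^2 * β ^ (2 - 2*α)) * (x ^ (2*α - 2) * Real.exp (-(2 * β ^ (-α)) * x ^ α)) := by
            rw [hdiv', hexp, ← hxp, ← hbp]; ring
    rw [h1, MeasureTheory.integral_const_mul,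
      integral_rpow_mul_exp_neg_mul_rpow hα0 hq hb]
    have hGammaArg : (2*α - 2 + 1) / α = 2 - 1/α := by field_simp; ring
    have hexpArg : -(2*α - 2 + 1) / α = -(2 - 1/α) := by field_simp; ring
    rw [hGammaArg, hexpArg]
    have hbpow : (2 * β ^ (-α)) ^ (-(2 - 1/α))
        = 2 ^ (-(2 - 1/α)) * β ^ (2*α - 1) := by
      have he : -α * -(2 - 1/α) = 2*α - 1 := by field_simp
      rw [Real.mul_rpow (by norm_num) (by positivity), ← Real.rpow_mul hβ.le, he]
    rw [hbpow]
    have h2 : (α/β)^2 * β ^ (2 - 2*α) * (2 ^ (-(2 - 1/α)) * β ^ (2*α - 1) * (1/α))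
        = α / β * 2 ^ (-(2 - 1/α)) := by
      have hββ : β ^ (2 - 2*α) * β ^ (2*α - 1) = β := by
        rw [← Real.rpow_add hβ]; norm_num
      calc (α/β)^2 * β ^ (2 - 2*α) * (2 ^ (-(2 - 1/α)) * β ^ (2*α - 1) * (1/α))
          = (α/β)^2 * (β ^ (2 - 2*α) * β ^ (2*α - 1)) * 2 ^ (-(2 - 1/α)) * (1/α) := by ring
        _ = (α/β)^2 * β * 2 ^ (-(2 - 1/α)) * (1/α) := by rw [hββ]
        _ = α / β * 2 ^ (-(2 - 1/α)) := by field_simp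
    rw [← mul_assoc, h2]
  rw [key]
  have hG : 0 < Real.Gamma (2 - 1/α) := Real.Gamma_pos_of_pos hs
  rw [Real.log_mul (by positivity) hG.ne', Real.log_mul (by positivity)
    (Real.rpow_pos_of_pos (by norm_num) _).ne', Real.log_div hα0.ne' hβ.ne',
    Real.log_rpow (by norm_num)]
  ring
end

section
/- Let X be a Weibull random variable with shape α and scale β > 0 and M_X(t) = E[exp(tX)]. If α = 1, then for all |t| < 1/β one has M_X(t) = 1/(1 - βt). If α > 1, then for all t ∈ ℝ the expectation E[exp(tX)] is finite and M_X(t) = Σ_{n=0}^∞ ((βt)^n / n!) Γ(1 + n/α). -/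
/-!
For `α = 1` the density is `β⁻¹ e^{-x/β}` and the integral is elementary. For `α > 1`,
Young's inequality gives `c x ≤ (x/β)^α / 2 + K` for every `c`, so `e^{cx} f(x)` is dominated
by a multiple of an integrable Weibull-type function. Dominated convergence then integrates the
exponential series term by term, and the moments `E[X^s] = β^s Γ(1 + s/α)` come from the Gamma
integral `∫ x^q e^{-b x^p} dx`.
-/

open Filter Topology Real MeasureTheory

open Set Nat

lemma Real.expSeries_div_hasSum_exp (x : ℝ) : HasSum (fun n : ℕ => x ^ n / n !) (exp x) :=
  Real.exp_eq_exp_ℝ ▸ NormedSpace.expSeries_div_hasSum_exp x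

lemma hasSum_integral_pow_mul_of_integrable_exp {μ : Measure ℝ} {g : ℝ → ℝ} {t : ℝ}
    (hg : AEStronglyMeasurable g μ) (hint : Integrable (fun x => exp (|t| * |x|) * |g x|) μ) :
    HasSum (fun n : ℕ => ∫ x, (t * x) ^ n / n ! * g x ∂μ)
      (∫ x, exp (t * x) * g x ∂μ) := by
  refine hasSum_integral_of_dominated_convergence (fun n x => (|t| * |x|) ^ n / n ! * |g x|)
    (fun n => by fun_prop) (fun n => ae_of_all _ fun x => ?_)
    (ae_of_all _ fun x => (Real.expSeries_div_hasSum_exp _).summable.mul_right _) ?_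
    (ae_of_all _ fun x => (Real.expSeries_div_hasSum_exp _).mul_right _)
  · simp
  · simpa only [tsum_mul_right, (Real.expSeries_div_hasSum_exp _).tsum_eq] using hint

lemma exists_mul_le_mul_rpow_add {p b : ℝ} (hp : 1 < p) (hb : 0 < b) (c : ℝ) :
    ∃ K, ∀ x, 0 ≤ x → c * x ≤ b * x ^ p + K := by
  have hp0 : p ≠ 0 := by positivity
  set a := (b * p) ^ p⁻¹
  have ha : 0 < a := by positivity
  refine ⟨(|c| / a) ^ p.conjExponent / p.conjExponent, fun x hx => ?_⟩
  have young := Real.young_inequality_of_nonneg (mul_nonneg ha.le hx)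
    (div_nonneg (abs_nonneg c) ha.le) (Real.HolderConjugate.conjExponent hp)
  rw [Real.mul_rpow ha.le hx, Real.rpow_inv_rpow (by positivity) hp0] at young
  calc c * x ≤ a * x * (|c| / a) := by
        rw [mul_comm a, mul_assoc, mul_div_cancel₀ _ ha.ne']
        nlinarith [le_abs_self c]
    _ ≤ _ := young.trans_eq (by field_simp)

lemma measurable_weibullPDF (α β : ℝ) : Measurable (weibullPDF α β) := by
  unfold weibullPDF; fun_prop

lemma weibullPDF_nonneg {α β x : ℝ} (hα : 0 ≤ α) (hβ : 0 ≤ β) (hx : 0 ≤ x) :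
    0 ≤ weibullPDF α β x := by
  unfold weibullPDF; positivity

lemma weibullPDF_one (β x : ℝ) : weibullPDF 1 β x = β⁻¹ * exp (-(x / β)) := by
  simp [weibullPDF]

lemma weibullPDF_eq_rpow_mul_exp {α β x : ℝ} (hβ : 0 < β) (hx : 0 ≤ x) :
    weibullPDF α β x = α / β ^ α * (x ^ (α - 1) * exp (-(β ^ α)⁻¹ * x ^ α)) := by
  rw [weibullPDF, div_rpow hx hβ.le, div_rpow hx hβ.le, rpow_sub hβ, rpow_one]
  field_simp

lemma integral_exp_mul_weibullPDF_one {β t : ℝ} (hβ : 0 < β) (ht : t < 1 / β) :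
    ∫ x in Ioi (0 : ℝ), exp (t * x) * weibullPDF 1 β x = 1 / (1 - β * t) := by
  have hexp (x : ℝ) : exp (t * x) * weibullPDF 1 β x = β⁻¹ * exp ((t - β⁻¹) * x) := by
    rw [weibullPDF_one, mul_left_comm, ← exp_add]
    ring_nf
  have hpos : 0 < 1 - β * t := by
    rw [lt_div_iff₀ hβ] at ht; linarith
  have hrate : t - β⁻¹ = -((1 - β * t) / β) := by field_simp; ring
  have hneg : t - β⁻¹ < 0 := hrate ▸ neg_neg_of_pos (by positivity)
  simp_rw [hexp, integral_const_mul, integral_exp_mul_Ioi hneg, mul_zero, exp_zero, hrate]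
  field_simp

lemma rpow_mul_weibullPDF_eq {α β s x : ℝ} (hβ : 0 < β) (hx : 0 < x) :
    x ^ s * weibullPDF α β x =
      α / β ^ α * (x ^ (s + α - 1) * exp (-(β ^ α)⁻¹ * x ^ α)) := by
  rw [weibullPDF_eq_rpow_mul_exp hβ hx.le, add_sub_assoc, rpow_add hx]
  ring

lemma integral_rpow_mul_weibullPDF {α β s : ℝ} (hα : 0 < α) (hβ : 0 < β) (hs : -α < s) :
    ∫ x in Ioi (0 : ℝ), x ^ s * weibullPDF α β x = β ^ s * Gamma (1 + s / α) := by
  have hβα : 0 < β ^ α := rpow_pos_of_pos hβ α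
  rw [setIntegral_congr_fun measurableSet_Ioi (fun _ hx => rpow_mul_weibullPDF_eq hβ hx),
    integral_const_mul, integral_rpow_mul_exp_neg_mul_rpow hα (by linarith) (inv_pos.2 hβα),
    sub_add_cancel, inv_rpow hβα.le, ← rpow_neg hβα.le, ← rpow_mul hβ.le,
    show (s + α) / α = 1 + s / α by field_simp; ring,
    show α * -(-(s + α) / α) = s + α by field_simp, rpow_add hβ]
  field_simp

lemma integrableOn_exp_mul_weibullPDF {α β : ℝ} (hα : 1 < α) (hβ : 0 < β) (c : ℝ) :
    IntegrableOn (fun x => exp (c * x) * weibullPDF α β x) (Ioi 0) := by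
  have hβα : 0 < β ^ α := rpow_pos_of_pos hβ α
  obtain ⟨K, hK⟩ := exists_mul_le_mul_rpow_add hα (half_pos (inv_pos.2 hβα)) c
  have hdom : IntegrableOn (fun x => exp K * (α / β ^ α) *
      (x ^ (α - 1) * exp (-((β ^ α)⁻¹ / 2) * x ^ α))) (Ioi 0) :=
    (integrableOn_rpow_mul_exp_neg_mul_rpow (by linarith) (by linarith)
      (half_pos (inv_pos.2 hβα))).const_mul _
  refine hdom.mono' (by unfold weibullPDF; fun_prop) ((ae_restrict_iff' measurableSet_Ioi).2
    (ae_of_all _ fun x (hx : 0 < x) => ?_))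
  rw [weibullPDF_eq_rpow_mul_exp hβ hx.le, Real.norm_of_nonneg (by positivity)]
  have hexp : exp (c * x) * exp (-(β ^ α)⁻¹ * x ^ α) ≤
      exp K * exp (-((β ^ α)⁻¹ / 2) * x ^ α) := by
    rw [← exp_add, ← exp_add, exp_le_exp]
    linarith [hK x hx.le]
  calc exp (c * x) * (α / β ^ α * (x ^ (α - 1) * exp (-(β ^ α)⁻¹ * x ^ α)))
      = α / β ^ α * x ^ (α - 1) * (exp (c * x) * exp (-(β ^ α)⁻¹ * x ^ α)) := by ring
    _ ≤ α / β ^ α * x ^ (α - 1) * (exp K * exp (-((β ^ α)⁻¹ / 2) * x ^ α)) := by gcongr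
    _ = _ := by ring

/-- Moment generating function of the Weibull distribution: for `α = 1` it equals
`1/(1 - βt)` for `|t| < 1/β`; for `α > 1` it is finite for all `t` and given by the series
`Σ (βt)^n/n! Γ(1 + n/α)`. -/
theorem weibullPDF_mgf (α β : ℝ) (hβ : 0 < β) :
    (α = 1 → ∀ t : ℝ, |t| < 1 / β →
      (∫ x in Set.Ioi (0 : ℝ), Real.exp (t * x) * weibullPDF α β x) = 1 / (1 - β * t)) ∧
    (1 < α → ∀ t : ℝ,
      IntegrableOn (fun x => Real.exp (t * x) * weibullPDF α β x) (Set.Ioi 0) ∧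
      (∫ x in Set.Ioi (0 : ℝ), Real.exp (t * x) * weibullPDF α β x) =
        ∑' n : ℕ, (β * t) ^ n / (n.factorial : ℝ) * Real.Gamma (1 + (n : ℝ) / α)) := by
  refine ⟨?_, fun hα t => ⟨integrableOn_exp_mul_weibullPDF hα hβ t, ?_⟩⟩
  · rintro rfl t ht
    exact integral_exp_mul_weibullPDF_one hβ ((le_abs_self t).trans_lt ht)
  have hα0 : 0 < α := by linarith
  have hdom : IntegrableOn (fun x => exp (|t| * |x|) * |weibullPDF α β x|) (Ioi 0) :=
    (integrableOn_exp_mul_weibullPDF hα hβ |t|).congr_fun (fun x (hx : 0 < x) => by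
      rw [abs_of_pos hx, abs_of_nonneg (weibullPDF_nonneg hα0.le hβ.le hx.le)]) measurableSet_Ioi
  rw [← (hasSum_integral_pow_mul_of_integrable_exp
    (measurable_weibullPDF α β).aestronglyMeasurable hdom).tsum_eq]
  refine tsum_congr fun n => ?_
  have hmoment := integral_rpow_mul_weibullPDF hα0 hβ (s := n)
    (by linarith [n.cast_nonneg (α := ℝ)])
  simp_rw [rpow_natCast] at hmoment
  calc ∫ x in Ioi 0, (t * x) ^ n / n ! * weibullPDF α β x
      = t ^ n / n ! * ∫ x in Ioi 0, x ^ n * weibullPDF α β x := by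
        rw [← integral_const_mul]; congr 1; ext x; ring
    _ = _ := by rw [hmoment]; ring
end

section
/- Let X be a Weibull random variable with shape α > 0 and scale β > 0 and density f(x;α,β). Fix real s and r with r > 0, and set ζ = s + (r-1)(α-1). If ζ > -α, then E[X^s log(X) f^{r-1}(X;α,β)] = (β^{s-r+1} α^{r-1} / r^{1 + ζ/α}) Γ(1 + ζ/α) [ log(β / r^{1/α}) + (1/α) ψ(1 + ζ/α) ], where ψ = Γ'/Γ is the digamma function. In particular, taking r = 1: for s > -α, E[X^s log X] = β^s Γ(1 + s/α) [ log β + (1/α) ψ(1 + s/α) ]. -/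
open Filter Topology Real MeasureTheory

/-- The digamma function `ψ(z) = d/dz log Γ(z) = Γ'(z)/Γ(z)`. -/
noncomputable def digamma (z : ℝ) : ℝ :=
  deriv (fun t => Real.log (Real.Gamma t)) z

/-!
Differentiating Euler's integral under the integral sign gives
`∫₀^∞ t^(a-1) log t e^(-t) dt = Γ'(a) = Γ(a) ψ(a)`. The substitution `t = b x^p` turns
this into `∫₀^∞ x^q log x e^(-b x^p) dx` with `a = (q+1)/p`; the extra term coming from
`log t = log b + p log x` is Euler's integral itself. The `r`-th power of the Weibull density
is of this form, with `p = α`, `q = s + (α-1) r` and `b = r β^(-α)`.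
-/

open Set

theorem abs_log_le_rpow_add_rpow_neg_div {x ε : ℝ} (hx : 0 < x) (hε : 0 < ε) :
    |log x| ≤ (x ^ ε + x ^ (-ε)) / ε := by
  have hup : log x ≤ x ^ ε / ε := log_le_rpow_div hx.le hε
  have hlow : -log x ≤ x ^ (-ε) / ε := by
    rw [← log_inv, rpow_neg hx.le, ← inv_rpow hx.le]
    exact log_le_rpow_div (inv_nonneg.2 hx.le) hε
  have hpos := div_pos (rpow_pos_of_pos hx ε) hε
  have hpos' := div_pos (rpow_pos_of_pos hx (-ε)) hε
  rw [abs_le, add_div]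
  constructor <;> linarith

theorem integrableOn_rpow_mul_log_mul_exp_neg {a : ℝ} (ha : 0 < a) :
    IntegrableOn (fun t => t ^ (a - 1) * log t * exp (-t)) (Ioi 0) := by
  set ε := a / 2
  have hε : 0 < ε := half_pos ha
  have hεa : ε < a := half_lt_self ha
  have hdom : IntegrableOn
      (fun t => ε⁻¹ * (exp (-t) * t ^ (a + ε - 1) + exp (-t) * t ^ (a - ε - 1))) (Ioi 0) :=
    ((GammaIntegral_convergent (by positivity)).add
      (GammaIntegral_convergent (by linarith))).const_mul _
  refine hdom.mono' (by fun_prop) (ae_restrict_of_forall_mem measurableSet_Ioi fun t ht => ?_)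
  have ht : 0 < t := ht
  calc ‖t ^ (a - 1) * log t * exp (-t)‖ = t ^ (a - 1) * |log t| * exp (-t) := by
        rw [norm_mul, norm_mul, norm_of_nonneg (rpow_nonneg ht.le _), Real.norm_eq_abs,
          norm_of_nonneg (exp_pos _).le]
    _ ≤ t ^ (a - 1) * ((t ^ ε + t ^ (-ε)) / ε) * exp (-t) := by
        gcongr; exact abs_log_le_rpow_add_rpow_neg_div ht hε
    _ = _ := by
        rw [sub_eq_add_neg a ε, add_sub_right_comm a, add_sub_right_comm a, rpow_add ht,
          rpow_add ht]
        field_simp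

theorem hasDerivAt_Gamma_of_pos {a : ℝ} (ha : 0 < a) :
    HasDerivAt Gamma (∫ t in Ioi 0, t ^ (a - 1) * log t * exp (-t)) a := by
  have hofReal : ∀ t ∈ Ioi (0 : ℝ), (t : ℂ) ^ ((a : ℂ) - 1) * (log t * exp (-t)) =
      ((t ^ (a - 1) * log t * exp (-t) : ℝ) : ℂ) := fun t ht => by
    rw [← Complex.ofReal_one, ← Complex.ofReal_sub, ← Complex.ofReal_cpow (le_of_lt ht)]
    push_cast
    ring
  have hC := Complex.hasDerivAt_GammaIntegral (s := a) (by simpa using ha)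
  rw [setIntegral_congr_fun measurableSet_Ioi hofReal, integral_complex_ofReal] at hC
  have hR := hC.real_of_complex
  rw [Complex.ofReal_re] at hR
  refine hR.congr_of_eventuallyEq ?_
  filter_upwards [eventually_gt_nhds ha] with x hx
  rw [← Complex.Gamma_eq_integral (by simpa using hx), Complex.Gamma_ofReal, Complex.ofReal_re]

theorem integral_rpow_mul_log_mul_exp_neg {a : ℝ} (ha : 0 < a) :
    ∫ t in Ioi 0, t ^ (a - 1) * log t * exp (-t) = Gamma a * digamma a := by
  have hlog := (hasDerivAt_Gamma_of_pos ha).log (Gamma_pos_of_pos ha).ne'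
  rw [digamma, hlog.deriv]
  field_simp [(Gamma_pos_of_pos ha).ne']

theorem integral_rpow_mul_log_sub_mul_exp_neg {a : ℝ} (ha : 0 < a) (c : ℝ) :
    ∫ t in Ioi 0, t ^ (a - 1) * (log t - c) * exp (-t) = Gamma a * (digamma a - c) := by
  have hsplit : ∀ t, t ^ (a - 1) * (log t - c) * exp (-t) =
      t ^ (a - 1) * log t * exp (-t) - c * (exp (-t) * t ^ (a - 1)) := fun t => by ring
  simp_rw [hsplit]
  rw [integral_sub (integrableOn_rpow_mul_log_mul_exp_neg ha)
      ((GammaIntegral_convergent ha).const_mul c), integral_const_mul,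
    integral_rpow_mul_log_mul_exp_neg ha, ← Gamma_eq_integral ha]
  ring

theorem integral_rpow_mul_log_mul_exp_neg_mul_rpow {p q b : ℝ} (hp : 0 < p) (hq : -1 < q)
    (hb : 0 < b) :
    ∫ x in Ioi 0, x ^ q * log x * exp (-b * x ^ p) =
      Gamma ((q + 1) / p) * (digamma ((q + 1) / p) - log b) / (b ^ ((q + 1) / p) * p ^ 2) := by
  set a := (q + 1) / p with ha_def
  have ha : 0 < a := div_pos (by linarith) hp
  set h : ℝ → ℝ := fun t => t ^ (a - 1) * (log t - log b) * exp (-t)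
  have hsubst : ∀ x ∈ Ioi (0 : ℝ), (p * x ^ (p - 1)) • h (b * x ^ p) =
      (b ^ (a - 1) * p ^ 2) * (x ^ q * log x * exp (-b * x ^ p)) := fun x hx => by
    have hx : 0 < x := hx
    have hq : q = p - 1 + p * (a - 1) := by rw [ha_def]; field_simp; ring
    simp only [h, smul_eq_mul]
    rw [mul_rpow hb.le (rpow_nonneg hx.le _), ← rpow_mul hx.le,
      log_mul hb.ne' (rpow_pos_of_pos hx _).ne', log_rpow hx, hq, rpow_add hx, neg_mul]
    ring
  have hint :
      ∫ t in Ioi 0, h t = b ^ a * p ^ 2 * ∫ x in Ioi 0, x ^ q * log x * exp (-b * x ^ p) :=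
    calc ∫ t in Ioi 0, h t = b * ∫ u in Ioi 0, h (b * u) := by
          rw [integral_comp_mul_left_Ioi h 0 hb, mul_zero, smul_eq_mul,
            mul_inv_cancel_left₀ hb.ne']
      _ = b * ∫ x in Ioi 0, (b ^ (a - 1) * p ^ 2) * (x ^ q * log x * exp (-b * x ^ p)) := by
          rw [← integral_comp_rpow_Ioi_of_pos hp, setIntegral_congr_fun measurableSet_Ioi hsubst]
      _ = _ := by
          rw [integral_const_mul, rpow_sub_one hb.ne']
          field_simp
  rw [integral_rpow_mul_log_sub_mul_exp_neg ha] at hint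
  rw [eq_div_iff (by positivity), hint]
  ring

theorem weibullPDF_rpow {α β x : ℝ} (r : ℝ) (hα : 0 ≤ α) (hβ : 0 < β) (hx : 0 < x) :
    weibullPDF α β x ^ r =
      α ^ r * β ^ (-(α * r)) * (x ^ ((α - 1) * r) * exp (-(r * β ^ (-α)) * x ^ α)) := by
  have hxβ : 0 < x / β := div_pos hx hβ
  have hexp : exp (-(x / β) ^ α) ^ r = exp (-(r * β ^ (-α)) * x ^ α) := by
    rw [← exp_mul, div_rpow hx.le hβ.le, rpow_neg hβ.le]
    ring_nf
  have hβpow : β ^ (-(α * r)) = (β ^ r)⁻¹ * (β ^ ((α - 1) * r))⁻¹ := by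
    rw [← rpow_neg hβ.le, ← rpow_neg hβ.le, ← rpow_add hβ]
    ring_nf
  rw [weibullPDF, mul_rpow (by positivity) (exp_pos _).le,
    mul_rpow (div_nonneg hα hβ.le) (rpow_nonneg hxβ.le _), ← rpow_mul hxβ.le, hexp,
    div_rpow hα hβ.le, div_rpow hx.le hβ.le, hβpow]
  ring

theorem integral_rpow_mul_log_mul_weibullPDF_rpow {α β s r : ℝ} (hα : 0 < α) (hβ : 0 < β)
    (hr : 0 < r) (hζ : -α < s + (r - 1) * (α - 1)) :
    ∫ x in Ioi 0, x ^ s * log x * weibullPDF α β x ^ r =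
      β ^ (s - r + 1) * α ^ (r - 1) / r ^ (1 + (s + (r - 1) * (α - 1)) / α) *
        Gamma (1 + (s + (r - 1) * (α - 1)) / α) *
        (log (β / r ^ (1 / α)) + (1 / α) * digamma (1 + (s + (r - 1) * (α - 1)) / α)) := by
  set a := 1 + (s + (r - 1) * (α - 1)) / α with ha_def
  set q := s + (α - 1) * r
  set b := r * β ^ (-α)
  have hq : -1 < q := by linarith
  have hb : 0 < b := by positivity
  have hqa : (q + 1) / α = a := by rw [ha_def]; field_simp; ring
  have hbpow : b ^ a = r ^ a * β ^ (-(α * a)) := by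
    rw [mul_rpow hr.le (rpow_nonneg hβ.le _), ← rpow_mul hβ.le, neg_mul]
  have hβpow : β ^ (-(α * r)) = β ^ (s - r + 1) * β ^ (-(α * a)) := by
    rw [← rpow_add hβ, ha_def]
    congr 1
    field_simp
    ring
  have hlogb : log b = log r - α * log β := by
    rw [log_mul hr.ne' (by positivity), log_rpow hβ]
    ring
  have hlog : log (β / r ^ (1 / α)) = log β - log r / α := by
    rw [log_div hβ.ne' (by positivity), log_rpow hr]
    ring
  have hαpow : α ^ r = α ^ (r - 1) * α := by
    rw [rpow_sub_one hα.ne']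
    field_simp
  calc ∫ x in Ioi 0, x ^ s * log x * weibullPDF α β x ^ r
      = α ^ r * β ^ (-(α * r)) * ∫ x in Ioi 0, x ^ q * log x * exp (-b * x ^ α) := by
        rw [← integral_const_mul]
        refine setIntegral_congr_fun measurableSet_Ioi fun x (hx : 0 < x) => ?_
        rw [weibullPDF_rpow r hα.le hβ hx, rpow_add hx]
        ring
    _ = α ^ r * β ^ (-(α * r)) * (Gamma a * (digamma a - log b) / (b ^ a * α ^ 2)) := by
        rw [integral_rpow_mul_log_mul_exp_neg_mul_rpow hα hq hb, hqa]
    _ = _ := by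
        rw [hbpow, hβpow, hlogb, hlog, hαpow]
        field_simp
        ring

/-- Second main tool: `E[X^s log(X) f^{r-1}(X;α,β)]`, with the particular case `r = 1`. -/
theorem weibullPDF_second_main_tool (α β s r : ℝ) (hα : 0 < α) (hβ : 0 < β) (hr : 0 < r)
    (hζ : s + (r - 1) * (α - 1) > -α) :
    (∫ x in Set.Ioi (0 : ℝ), x ^ s * Real.log x * (weibullPDF α β x) ^ r) =
      β ^ (s - r + 1) * α ^ (r - 1) / r ^ (1 + (s + (r - 1) * (α - 1)) / α) *
        Real.Gamma (1 + (s + (r - 1) * (α - 1)) / α) *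
        (Real.log (β / r ^ (1 / α)) +
          (1 / α) * digamma (1 + (s + (r - 1) * (α - 1)) / α)) ∧
    (∀ s' : ℝ, s' > -α →
      (∫ x in Set.Ioi (0 : ℝ), x ^ s' * Real.log x * weibullPDF α β x) =
        β ^ s' * Real.Gamma (1 + s' / α) *
          (Real.log β + (1 / α) * digamma (1 + s' / α))) := by
  refine ⟨integral_rpow_mul_log_mul_weibullPDF_rpow hα hβ hr hζ, fun s' hs' => ?_⟩
  simpa using
    integral_rpow_mul_log_mul_weibullPDF_rpow (r := 1) hα hβ one_pos (by simpa using hs')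
end

section
/- Let f(x;α,β) = (α/β)(x/β)^{α-1} exp(-(x/β)^α) be the Weibull density with α, β > 0, let q > 0, q ≠ 1, and define the log_q score functions ψ_α(x) = f^{1-q}(x;α,β) { 1/α + [1 - (x/β)^α] log(x/β) } and ψ_β(x) = (α/β) f^{1-q}(x;α,β) [ (x/β)^α - 1 ]. Then as x → ∞: if q > 1 then ψ_α(x) → -∞ and ψ_β(x) → +∞ (for every α > 0), while if 0 < q < 1 then ψ_α(x) → 0 and ψ_β(x) → 0 (for every α > 0). -/
open Filter Topology Real MeasureTheory

/-!
Substituting `t = (x / β) ^ α`, which tends to `∞` with `x`, turns `f ^ (1 - q)` into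
`(α / β) ^ (1 - q) * t ^ c * exp ((q - 1) * t)` and `log (x / β)` into `log t / α`. Both scores
become such an exponential times a factor of at most polynomial growth in `t`
(`(t - 1) * log t` or `t - 1`, up to constants), so the sign of `q - 1` decides everything:
for `q > 1` the exponential blows up and the factor's sign gives `∓∞`, for `q < 1` it kills
the factor.
-/

open Asymptotics

lemma tendsto_rpow_mul_exp_mul_atTop (c : ℝ) {r : ℝ} (hr : 0 < r) :
    Tendsto (fun t : ℝ => t ^ c * exp (r * t)) atTop atTop := by
  refine (tendsto_exp_mul_div_rpow_atTop (-c) r hr).congr' ?_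
  filter_upwards [eventually_gt_atTop 0] with t ht
  rw [rpow_neg ht.le, div_inv_eq_mul, mul_comm]

lemma tendsto_rpow_mul_exp_mul_mul_nhds_zero {g : ℝ → ℝ} (c : ℝ) {r : ℝ} {k : ℕ}
    (hr : r < 0) (hg : g =O[atTop] (· ^ k)) :
    Tendsto (fun t => t ^ c * exp (r * t) * g t) atTop (𝓝 0) := by
  have hlim : Tendsto (fun t : ℝ => t ^ (c + k) * exp (r * t)) atTop (𝓝 0) := by
    simpa using tendsto_rpow_mul_exp_neg_mul_atTop_nhds_zero (c + k) (-r) (neg_pos.2 hr)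
  refine IsBigO.trans_tendsto ?_ hlim
  refine ((isBigO_refl (fun t : ℝ => t ^ c * exp (r * t)) atTop).mul hg).congr' .rfl ?_
  filter_upwards [eventually_gt_atTop 0] with t ht
  rw [rpow_add_natCast ht.ne']
  ring

lemma tendsto_inv_add_one_sub_mul_log_div_atBot {α : ℝ} (hα : 0 < α) :
    Tendsto (fun t => 1 / α + (1 - t) * (log t / α)) atTop atBot := by
  have h : Tendsto (fun t => (t - 1) * log t) atTop atTop :=
    (tendsto_atTop_add_const_right _ (-1) tendsto_id).atTop_mul_atTop₀ tendsto_log_atTop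
  refine tendsto_atBot_add_const_left _ _
    ((tendsto_neg_atTop_atBot.comp h).atBot_div_const hα |>.congr fun t => ?_)
  simp only [Function.comp_apply]
  ring

lemma isBigO_inv_add_one_sub_mul_log_div (α : ℝ) :
    (fun t => 1 / α + (1 - t) * (log t / α)) =O[atTop] (· ^ 2) := by
  have hone : (fun _ : ℝ => (1 : ℝ)) =O[atTop] id := (isLittleO_const_id_atTop 1).isBigO
  have hconst : (fun _ : ℝ => 1 / α) =O[atTop] (· ^ 2) := by
    simpa [sq] using (isLittleO_const_id_atTop (1 / α)).isBigO.mul hone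
  have hlin : (fun t : ℝ => 1 - t) =O[atTop] id := hone.sub (isBigO_refl _ _)
  have hlog : (fun t => log t / α) =O[atTop] id := by
    simpa [div_eq_inv_mul] using isLittleO_log_id_atTop.isBigO.const_mul_left α⁻¹
  exact hconst.add (by simpa [sq] using hlin.mul hlog)

lemma isBigO_sub_one_pow_one : (fun t : ℝ => t - 1) =O[atTop] (· ^ 1) :=
  ((isBigO_refl id atTop).sub (isLittleO_const_id_atTop (1 : ℝ)).isBigO).congr_right
    fun t => (pow_one t).symm

lemma weibullPDF_rpow_eq {α β x : ℝ} (hα : 0 < α) (hβ : 0 < β) (hx : 0 < x) (p : ℝ) :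
    weibullPDF α β x ^ p =
      (α / β) ^ p * (((x / β) ^ α) ^ ((α - 1) * p / α) * exp (-p * (x / β) ^ α)) := by
  have hxβ : 0 < x / β := div_pos hx hβ
  rw [weibullPDF, mul_rpow (by positivity) (exp_pos _).le,
    mul_rpow (div_pos hα hβ).le (rpow_nonneg hxβ.le _), ← rpow_mul hxβ.le,
    ← rpow_mul hxβ.le, ← exp_mul, mul_div_cancel₀ _ hα.ne']
  ring_nf

section Substitution

variable {α β : ℝ} (hα : 0 < α) (hβ : 0 < β) (p : ℝ)
include hα hβ

lemma weibullPDF_rpow_mul_shape_score_eventuallyEq :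
    (fun x => weibullPDF α β x ^ p * (1 / α + (1 - (x / β) ^ α) * log (x / β))) =ᶠ[atTop]
      (fun t => (α / β) ^ p * (t ^ ((α - 1) * p / α) * exp (-p * t) *
        (1 / α + (1 - t) * (log t / α)))) ∘ fun x => (x / β) ^ α := by
  filter_upwards [eventually_gt_atTop 0] with x hx
  rw [Function.comp_apply, weibullPDF_rpow_eq hα hβ hx, log_rpow (div_pos hx hβ),
    mul_div_cancel_left₀ _ hα.ne']
  ring

lemma weibullPDF_rpow_mul_scale_score_eventuallyEq :
    (fun x => α / β * weibullPDF α β x ^ p * ((x / β) ^ α - 1)) =ᶠ[atTop]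
      (fun t => α / β * (α / β) ^ p * (t ^ ((α - 1) * p / α) * exp (-p * t) * (t - 1))) ∘
        fun x => (x / β) ^ α := by
  filter_upwards [eventually_gt_atTop 0] with x hx
  rw [Function.comp_apply, weibullPDF_rpow_eq hα hβ hx]
  ring

end Substitution

theorem weibullPDF_logq_score_limits_general (α β q : ℝ) (hα : 0 < α) (hβ : 0 < β) :
    (1 < q →
      Tendsto (fun x => (weibullPDF α β x) ^ (1 - q) *
        (1 / α + (1 - (x / β) ^ α) * Real.log (x / β))) atTop atBot ∧
      Tendsto (fun x => (α / β) * (weibullPDF α β x) ^ (1 - q) * ((x / β) ^ α - 1))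
        atTop atTop) ∧
    (q < 1 →
      Tendsto (fun x => (weibullPDF α β x) ^ (1 - q) *
        (1 / α + (1 - (x / β) ^ α) * Real.log (x / β))) atTop (𝓝 0) ∧
      Tendsto (fun x => (α / β) * (weibullPDF α β x) ^ (1 - q) * ((x / β) ^ α - 1))
        atTop (𝓝 0)) := by
  have ht : Tendsto (fun x => (x / β) ^ α) atTop atTop :=
    (tendsto_rpow_atTop hα).comp (tendsto_id.atTop_div_const hβ)
  have hC : 0 < (α / β) ^ (1 - q) := by positivity
  have hαβC : 0 < α / β * (α / β) ^ (1 - q) := by positivity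
  have hshape := weibullPDF_rpow_mul_shape_score_eventuallyEq hα hβ (1 - q)
  have hscale := weibullPDF_rpow_mul_scale_score_eventuallyEq hα hβ (1 - q)
  set c := (α - 1) * (1 - q) / α
  refine ⟨fun hq => ?_, fun hq => ?_⟩
  · have hgrowth := tendsto_rpow_mul_exp_mul_atTop c (r := -(1 - q)) (by linarith)
    constructor
    · exact (((hgrowth.atTop_mul_atBot₀ (tendsto_inv_add_one_sub_mul_log_div_atBot hα)
        ).const_mul_atBot hC).comp ht).congr' hshape.symm
    · exact (((hgrowth.atTop_mul_atTop₀ (tendsto_atTop_add_const_right _ (-1) tendsto_id)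
        ).const_mul_atTop hαβC).comp ht).congr' hscale.symm
  · have hr : -(1 - q) < 0 := by linarith
    constructor
    · simpa only [mul_zero] using (((tendsto_rpow_mul_exp_mul_mul_nhds_zero c hr
        (isBigO_inv_add_one_sub_mul_log_div α)).const_mul _).comp ht).congr' hshape.symm
    · simpa only [mul_zero] using (((tendsto_rpow_mul_exp_mul_mul_nhds_zero c hr
        isBigO_sub_one_pow_one).const_mul _).comp ht).congr' hscale.symm

/-- Limits as `x → ∞` of the `log_q` score functions `ψ_α` and `ψ_β` of the Weibull
distribution: for `q > 1` they diverge to `-∞` and `+∞` respectively, while for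
`0 < q < 1` both tend to `0`. -/
theorem weibullPDF_logq_score_limits (α β q : ℝ) (hα : 0 < α) (hβ : 0 < β)
    (hq0 : 0 < q) (hq1 : q ≠ 1) :
    (1 < q →
      Tendsto (fun x => (weibullPDF α β x) ^ (1 - q) *
        (1 / α + (1 - (x / β) ^ α) * Real.log (x / β))) atTop atBot ∧
      Tendsto (fun x => (α / β) * (weibullPDF α β x) ^ (1 - q) * ((x / β) ^ α - 1))
        atTop atTop) ∧
    (q < 1 →
      Tendsto (fun x => (weibullPDF α β x) ^ (1 - q) *
        (1 / α + (1 - (x / β) ^ α) * Real.log (x / β))) atTop (𝓝 0) ∧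
      Tendsto (fun x => (α / β) * (weibullPDF α β x) ^ (1 - q) * ((x / β) ^ α - 1))
        atTop (𝓝 0)) :=
  weibullPDF_logq_score_limits_general α β q hα hβ
end
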